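/- Let A be a Banach algebra, B a closed subalgebra of A and I a closed two-sided ideal of A such that A = B ⊕ I (B and I are closed complementary subspaces of A). If A is approximately cyclic amenable, then B is approximately cyclic amenable. -/

import Mathlib

/-! The projection `P : A → B` along `I` is multiplicative because `I` is a two-sided ideal, and it
is continuous because `B` and `I` are closed complements in a Banach space; it restricts to the
identity on `B`. A cyclic derivation `D` of `B` therefore pulls back to the cyclic derivation
`a ↦ D (P a) ∘ P` of `A`, and restricting to `B` a net that approximates the pullback gives a
net that approximates `D`. -/

open Filter Topology

noncomputable section

universe u v

variable {A : Type u} [NonUnitalNormedRing A] [NormedSpace ℂ A]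
  [IsScalarTower ℂ A A] [SMulCommClass ℂ A A]

/-- The left module action of `A` on its dual `A*`: `(a · f) b = f (b * a)`. -/
def lAct (a : A) (f : A →L[ℂ] ℂ) : A →L[ℂ] ℂ :=
  f.comp ((ContinuousLinearMap.mul ℂ A).flip a)

/-- The right module action of `A` on its dual `A*`: `(f · a) b = f (a * b)`. -/
def rAct (f : A →L[ℂ] ℂ) (a : A) : A →L[ℂ] ℂ :=
  f.comp (ContinuousLinearMap.mul ℂ A a)

/-- A bounded linear `D : A → A*` is a derivation if `D (a * b) = D a · b + a · D b`. -/
def IsDerivation (D : A →L[ℂ] (A →L[ℂ] ℂ)) : Prop :=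
  ∀ a b : A, D (a * b) = rAct (D a) b + lAct a (D b)

/-- A derivation `D : A → A*` is cyclic if `⟨D a, b⟩ + ⟨D b, a⟩ = 0` for all `a, b`. -/
def IsCyclicDeriv (D : A →L[ℂ] (A →L[ℂ] ℂ)) : Prop :=
  ∀ a b : A, D a b + D b a = 0

/-- `D : A → A*` is approximately inner if there is a net `(f i)` in `A*` with
`D a = lim_i (a · f i - f i · a)` in norm, for every `a ∈ A`. -/
def IsApproxInner {A : Type u} [NonUnitalNormedRing A] [NormedSpace ℂ A]
    [IsScalarTower ℂ A A] [SMulCommClass ℂ A A] (D : A →L[ℂ] (A →L[ℂ] ℂ)) : Prop :=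
  ∃ (ι : Type u) (l : Filter ι) (f : ι → (A →L[ℂ] ℂ)), l.NeBot ∧
    ∀ a : A, Tendsto (fun i => lAct a (f i) - rAct (f i) a) l (𝓝 (D a))

/-- `D : A → A*` is inner if `D a = a · f - f · a` for some fixed `f ∈ A*`. -/
def IsInner (D : A →L[ℂ] (A →L[ℂ] ℂ)) : Prop :=
  ∃ f : A →L[ℂ] ℂ, ∀ a : A, D a = lAct a f - rAct f a

/-- A Banach algebra is approximately cyclic amenable if every cyclic bounded
derivation `D : A → A*` is approximately inner. -/
def ApproxCyclicAmenable (A : Type u) [NonUnitalNormedRing A] [NormedSpace ℂ A]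
    [IsScalarTower ℂ A A] [SMulCommClass ℂ A A] : Prop :=
  ∀ D : A →L[ℂ] (A →L[ℂ] ℂ), IsDerivation D → IsCyclicDeriv D → IsApproxInner D

/-- A Banach algebra is cyclic amenable if every cyclic bounded derivation
`D : A → A*` is inner. -/
def CyclicAmenable (A : Type u) [NonUnitalNormedRing A] [NormedSpace ℂ A]
    [IsScalarTower ℂ A A] [SMulCommClass ℂ A A] : Prop :=
  ∀ D : A →L[ℂ] (A →L[ℂ] ℂ), IsDerivation D → IsCyclicDeriv D → IsInner D

/-- The normed-space structure on a non-unital subalgebra, restricted from `A`. -/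
instance nonUnitalSubalgebraNormedSpaceComplex (B : NonUnitalSubalgebra ℂ A) :
    NormedSpace ℂ B :=
  SubmoduleClass.toNormedSpace (R := ℂ) B


end

namespace NonUnitalSubalgebra

theorem projectionOnto_mul {R A : Type*} [CommRing R] [NonUnitalRing A] [Module R A]
    [IsScalarTower R A A] [SMulCommClass R A A] {B : NonUnitalSubalgebra R A}
    {I : Submodule R A} (hr : ∀ a : A, ∀ x ∈ I, x * a ∈ I) (hl : ∀ a : A, ∀ x ∈ I, a * x ∈ I)
    (h : IsCompl B.toSubmodule I) (x y : A) :
    (B.toSubmodule.projectionOnto I h (x * y) : A) =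
      B.toSubmodule.projectionOnto I h x * B.toSubmodule.projectionOnto I h y := by
  set π := B.toSubmodule.projection I h
  have hx := Submodule.sub_projection_mem h x
  have hy := Submodule.sub_projection_mem h y
  have hxy : x * y = π x * π y + (π x * (y - π y) + (x - π x) * y) := by noncomm_ring
  have hrest : π x * (y - π y) + (x - π x) * y ∈ I := I.add_mem (hl _ _ hy) (hr _ _ hx)
  have hmem : π x * π y ∈ B := B.mul_mem (Submodule.projection_apply_mem h x)
    (Submodule.projection_apply_mem h y)
  rw [Submodule.coe_projectionOnto_apply, hxy, map_add,
    (Submodule.projection_apply_eq_zero_iff h).2 hrest, add_zero,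
    Submodule.projection_apply_of_mem_left h hmem]
  rfl

end NonUnitalSubalgebra

section Retraction

variable {A B : Type u} [NonUnitalNormedRing A] [NormedSpace ℂ A] [NonUnitalNormedRing B]
  [NormedSpace ℂ B]

noncomputable def derivPullback (P : A →L[ℂ] B) (D : B →L[ℂ] (B →L[ℂ] ℂ)) : A →L[ℂ] (A →L[ℂ] ℂ) :=
  ((ContinuousLinearMap.compL ℂ A B ℂ).flip P).comp (D.comp P)

@[simp]
theorem derivPullback_apply (P : A →L[ℂ] B) (D : B →L[ℂ] (B →L[ℂ] ℂ)) (a c : A) :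
    derivPullback P D a c = D (P a) (P c) :=
  rfl

theorem IsCyclicDeriv.derivPullback (P : A →L[ℂ] B) {D : B →L[ℂ] (B →L[ℂ] ℂ)}
    (hD : IsCyclicDeriv D) : IsCyclicDeriv (derivPullback P D) :=
  fun a a' => hD (P a) (P a')

variable [IsScalarTower ℂ A A] [SMulCommClass ℂ A A] [IsScalarTower ℂ B B] [SMulCommClass ℂ B B]

theorem IsDerivation.derivPullback {P : A →L[ℂ] B} (hP : ∀ a a', P (a * a') = P a * P a')
    {D : B →L[ℂ] (B →L[ℂ] ℂ)} (hD : IsDerivation D) : IsDerivation (derivPullback P D) := by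
  intro a a'
  ext c
  simp [hP, hD (P a) (P a'), rAct, lAct]

theorem lAct_sub_rAct_comp {ι : B →L[ℂ] A} (hι : ∀ b b', ι (b * b') = ι b * ι b')
    (f : A →L[ℂ] ℂ) (b : B) :
    lAct b (f.comp ι) - rAct (f.comp ι) b = (lAct (ι b) f - rAct f (ι b)).comp ι := by
  ext c
  simp [lAct, rAct, hι]

theorem IsApproxInner.of_derivPullback {P : A →L[ℂ] B} {ι : B →L[ℂ] A}
    (hι : ∀ b b', ι (b * b') = ι b * ι b') (hPι : ∀ b, P (ι b) = b)
    {D : B →L[ℂ] (B →L[ℂ] ℂ)} (hD : IsApproxInner (derivPullback P D)) : IsApproxInner D := by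
  obtain ⟨J, l, f, hl, hf⟩ := hD
  let restrict : (A →L[ℂ] ℂ) →L[ℂ] (B →L[ℂ] ℂ) := (ContinuousLinearMap.compL ℂ B A ℂ).flip ι
  refine ⟨J, l, fun j => restrict (f j), hl, fun b => ?_⟩
  have hDb : restrict (derivPullback P D (ι b)) = D b := by
    ext c
    simp [restrict, hPι]
  have hlim := (restrict.continuous.tendsto _).comp (hf (ι b))
  rw [hDb] at hlim
  simpa only [Function.comp_def, restrict, ContinuousLinearMap.flip_apply,
    ContinuousLinearMap.compL_apply, lAct_sub_rAct_comp hι] using hlim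

theorem ApproxCyclicAmenable.of_retraction (P : A →L[ℂ] B) (ι : B →L[ℂ] A)
    (hP : ∀ a a', P (a * a') = P a * P a') (hι : ∀ b b', ι (b * b') = ι b * ι b')
    (hPι : ∀ b, P (ι b) = b) (hA : ApproxCyclicAmenable A) : ApproxCyclicAmenable B :=
  fun _ hD hDc => (hA _ (hD.derivPullback hP) (hDc.derivPullback P)).of_derivPullback hι hPι

end Retraction

/-- Let `B` be a closed subalgebra and `I` a closed two-sided ideal of a
Banach algebra `A` such that `A = B ⊕ I`.  If `A` is approximately cyclic amenable, then so
is `B`. -/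
theorem subalgebra_approxCyclicAmenable_of_directSum
    {A : Type u} [NonUnitalNormedRing A] [NormedSpace ℂ A]
    [IsScalarTower ℂ A A] [SMulCommClass ℂ A A] [CompleteSpace A]
    (B : NonUnitalSubalgebra ℂ A) (hBclosed : IsClosed (B : Set A))
    (I : Submodule ℂ A) (hIclosed : IsClosed (I : Set A))
    (hr : ∀ (a : A), ∀ x ∈ I, x * a ∈ I) (hl : ∀ (a : A), ∀ x ∈ I, a * x ∈ I)
    (hdisj : ∀ x : A, x ∈ B → x ∈ I → x = 0)
    (hsum : ∀ a : A, ∃ b ∈ B, ∃ x ∈ I, a = b + x)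
    (hA : ApproxCyclicAmenable A) :
    ApproxCyclicAmenable ↥B := by
  have hcompl : IsCompl B.toSubmodule I := by
    refine ⟨Submodule.disjoint_def.2 hdisj, Submodule.codisjoint_iff_exists_add_eq.2 fun a => ?_⟩
    obtain ⟨b, hb, x, hx, rfl⟩ := hsum a
    exact ⟨b, x, hb, hx, rfl⟩
  have htop := Submodule.IsCompl.isTopCompl_of_isClosed hcompl hBclosed hIclosed
  refine hA.of_retraction (B.toSubmodule.projectionOntoL I htop) B.toSubmodule.subtypeL
    (fun a a' => Subtype.ext ?_) (fun _ _ => rfl) (Submodule.projectionOntoL_apply_left htop)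
  exact NonUnitalSubalgebra.projectionOnto_mul hr hl hcompl a a'
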